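/- Let S1 ∼ N(0, 1/γ), S2 ∼ N(0, P2) and X with E‖X‖² ≤ nP be random vectors in ℝⁿ, with S1 independent of (S2, X). Set α = (1/γ)/((1/γ)+P2). Then E‖S1 − α(X + S1 + S2)‖² ≥ n·α·P2 − 2n·α²·√(P2·P). In particular, the mismatched MSE using the estimator α·Y with Y = X+S1+S2 is lower bounded by nαP2 − 2nα²√(P·P2). -/

import Mathlib

/-!
Write `Y = X + S1 + S2`, so that `S1 - α Y = (1 - α) S1 - α (S2 + X)`. Since `S1` is centred and
independent of `(S2, X)`, it is orthogonal to `S2` and to `X` in `L²(μ; ℝⁿ)`, hence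
`E‖S1 - α Y‖² = (1 - α)² E‖S1‖² + α² E‖S2 + X‖²`. By Cauchy–Schwarz in `L²`,
`E‖S2 + X‖² ≥ E‖S2‖² - 2 √(E‖S2‖² E‖X‖²) ≥ n P2 - 2 n √(P2 P)`, and the choice of `α` is exactly
the one for which `(1 - α)² n / γ + α² n P2 = n α P2`.
-/

open MeasureTheory ProbabilityTheory
open scoped RealInnerProductSpace

section InnerProductSpace

variable {F : Type*} [NormedAddCommGroup F] [InnerProductSpace ℝ F]

lemma le_norm_sub_smul_sq_of_inner_eq_zero {u v w : F} (α : ℝ) (huv : ⟪u, v⟫ = 0)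
    (huw : ⟪u, w⟫ = 0) :
    (1 - α) ^ 2 * ‖u‖ ^ 2 + α ^ 2 * (‖v‖ ^ 2 - 2 * (‖v‖ * ‖w‖)) ≤ ‖u - α • (w + u + v)‖ ^ 2 := by
  have hu : ⟪u, v + w⟫ = 0 := by rw [inner_add_right, huv, huw, add_zero]
  have hvw : -(‖v‖ * ‖w‖) ≤ ⟪v, w⟫ := neg_le_of_abs_le (abs_real_inner_le_norm v w)
  have hsplit : u - α • (w + u + v) = (1 - α) • u - α • (v + w) := by module
  rw [hsplit, norm_sub_sq_real, inner_smul_left, inner_smul_right, hu, norm_smul, norm_smul,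
    mul_pow, mul_pow, norm_add_sq_real, Real.norm_eq_abs, Real.norm_eq_abs, sq_abs, sq_abs]
  nlinarith [sq_nonneg α, sq_nonneg ‖w‖]

end InnerProductSpace

namespace MeasureTheory

variable {Ω E : Type*} {mΩ : MeasurableSpace Ω} {μ : Measure Ω}
  [NormedAddCommGroup E] [InnerProductSpace ℝ E]

lemma MemLp.inner_toLp_toLp {f g : Ω → E} (hf : MemLp f 2 μ) (hg : MemLp g 2 μ) :
    ⟪hf.toLp f, hg.toLp g⟫ = ∫ ω, ⟪f ω, g ω⟫ ∂μ := by
  rw [L2.inner_def]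
  refine integral_congr_ae ?_
  filter_upwards [hf.coeFn_toLp, hg.coeFn_toLp] with ω hfω hgω
  rw [hfω, hgω]

lemma MemLp.norm_toLp_sq {f : Ω → E} (hf : MemLp f 2 μ) :
    ‖hf.toLp f‖ ^ 2 = ∫ ω, ‖f ω‖ ^ 2 ∂μ := by
  simp_rw [← real_inner_self_eq_norm_sq, hf.inner_toLp_toLp hf]

lemma le_integral_norm_sub_smul_sq_of_integral_inner_eq_zero {S1 S2 X : Ω → E}
    (h1 : MemLp S1 2 μ) (h2 : MemLp S2 2 μ) (hX : MemLp X 2 μ)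
    (h12 : ∫ ω, ⟪S1 ω, S2 ω⟫ ∂μ = 0) (h1X : ∫ ω, ⟪S1 ω, X ω⟫ ∂μ = 0) (α : ℝ) :
    (1 - α) ^ 2 * ∫ ω, ‖S1 ω‖ ^ 2 ∂μ
        + α ^ 2 * (∫ ω, ‖S2 ω‖ ^ 2 ∂μ - 2 * √((∫ ω, ‖S2 ω‖ ^ 2 ∂μ) * ∫ ω, ‖X ω‖ ^ 2 ∂μ)) ≤
      ∫ ω, ‖S1 ω - α • (X ω + S1 ω + S2 ω)‖ ^ 2 ∂μ := by
  have h := le_norm_sub_smul_sq_of_inner_eq_zero α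
    (h1.inner_toLp_toLp h2 ▸ h12) (h1.inner_toLp_toLp hX ▸ h1X)
  rwa [← Real.sqrt_sq (mul_nonneg (norm_nonneg _) (norm_nonneg _)), mul_pow, h1.norm_toLp_sq,
    h2.norm_toLp_sq, hX.norm_toLp_sq, ← MemLp.toLp_add, ← MemLp.toLp_add,
    ← MemLp.toLp_const_smul, ← MemLp.toLp_sub, MemLp.norm_toLp_sq] at h

end MeasureTheory

namespace ProbabilityTheory

variable {Ω : Type*} {mΩ : MeasurableSpace Ω} {μ : Measure Ω}

lemma IndepFun.integral_inner_eq_zero {E : Type*} [NormedAddCommGroup E] [InnerProductSpace ℝ E]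
    [CompleteSpace E] [MeasurableSpace E] [BorelSpace E] {X Y : Ω → E} (hXY : X ⟂ᵢ[μ] Y)
    (hX : Integrable X μ) (hY : Integrable Y μ) (hX0 : μ[X] = 0) :
    ∫ ω, ⟪X ω, Y ω⟫ ∂μ = 0 := by
  have h := hXY.integral_bilin hX hY (innerSL ℝ (E := E))
  rw [hX0, map_zero] at h
  exact h

-- `μ.map Y = 0` whenever `Y` is not a.e.-measurable.
lemma HasLaw.of_map_eq {𝓧 : Type*} {m𝓧 : MeasurableSpace 𝓧} {ν : Measure 𝓧}
    [IsProbabilityMeasure ν] {Y : Ω → 𝓧} (h : μ.map Y = ν) : HasLaw Y ν μ :=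
  ⟨.of_map_ne_zero (h ▸ IsProbabilityMeasure.ne_zero ν), h⟩

section Gaussian

variable {v : NNReal}

lemma HasLaw.memLp_of_gaussianReal {Y : Ω → ℝ} {m : ℝ} (hY : HasLaw Y (gaussianReal m v) μ)
    (p : ENNReal) (hp : p ≠ ⊤) : MemLp Y p μ := by
  have h := memLp_id_gaussianReal' (μ := m) (v := v) p hp
  rw [← hY.map_eq] at h
  exact (memLp_map_measure_iff aestronglyMeasurable_id hY.aemeasurable).mp h

lemma HasLaw.integral_sq_of_gaussianReal {Y : Ω → ℝ} (hY : HasLaw Y (gaussianReal 0 v) μ) :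
    ∫ ω, Y ω ^ 2 ∂μ = v := by
  rw [← variance_of_integral_eq_zero hY.aemeasurable
      (hY.integral_eq.trans integral_id_gaussianReal),
    hY.variance_eq, variance_id_gaussianReal]

variable {ι : Type*} [Fintype ι] {S : Ω → EuclideanSpace ℝ ι}
  (hS : ∀ i, HasLaw (fun ω ↦ S ω i) (gaussianReal 0 v) μ)
include hS

lemma memLp_two_of_forall_hasLaw_gaussianReal : MemLp S 2 μ :=
  memLp_piLp_iff.2 fun i ↦ (hS i).memLp_of_gaussianReal 2 (by simp)

lemma integral_eq_zero_of_forall_hasLaw_gaussianReal : μ[S] = 0 := by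
  ext i
  rw [eval_integral_piLp fun i ↦
      memLp_one_iff_integrable.1 ((hS i).memLp_of_gaussianReal 1 (by simp)),
    PiLp.zero_apply]
  exact (hS i).integral_eq.trans integral_id_gaussianReal

lemma integral_norm_sq_of_forall_hasLaw_gaussianReal :
    ∫ ω, ‖S ω‖ ^ 2 ∂μ = Fintype.card ι * v := by
  simp_rw [EuclideanSpace.real_norm_sq_eq]
  rw [integral_finsetSum _ fun i _ ↦ ((hS i).memLp_of_gaussianReal 2 (by simp)).integrable_sq]
  simp [(hS _).integral_sq_of_gaussianReal]

end Gaussian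

end ProbabilityTheory

theorem stmt_8_general (n : ℕ) (γ P P2 : ℝ) (hγ : 0 < γ) (hP2 : 0 ≤ P2)
    {Ω : Type*} [MeasureSpace Ω] (μ : Measure Ω) [IsProbabilityMeasure μ]
    (S1 S2 X : Ω → EuclideanSpace ℝ (Fin n))
    (hmX : Measurable X)
    (hS1 : ∀ i, Measure.map (fun ω => S1 ω i) μ = gaussianReal 0 (Real.toNNReal (1 / γ)))
    (hS2 : ∀ i, Measure.map (fun ω => S2 ω i) μ = gaussianReal 0 (Real.toNNReal P2))
    (hindep : IndepFun S1 (fun ω => (S2 ω, X ω)) μ)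
    (hXint : Integrable (fun ω => ‖X ω‖ ^ 2) μ)
    (hXpow : ∫ ω, ‖X ω‖ ^ 2 ∂μ ≤ n * P) :
    (n : ℝ) * ((1 / γ) / (1 / γ + P2)) * P2
        - 2 * n * ((1 / γ) / (1 / γ + P2)) ^ 2 * Real.sqrt (P2 * P) ≤
      ∫ ω, ‖S1 ω - ((1 / γ) / (1 / γ + P2)) • (X ω + S1 ω + S2 ω)‖ ^ 2 ∂μ := by
  set α := (1 / γ) / (1 / γ + P2)
  have hG1 i := HasLaw.of_map_eq (hS1 i)
  have hG2 i := HasLaw.of_map_eq (hS2 i)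
  have hL1 := memLp_two_of_forall_hasLaw_gaussianReal hG1
  have hL2 := memLp_two_of_forall_hasLaw_gaussianReal hG2
  have hLX : MemLp X 2 μ := (memLp_two_iff_integrable_sq_norm hmX.aestronglyMeasurable).2 hXint
  have hmean := integral_eq_zero_of_forall_hasLaw_gaussianReal hG1
  have hbound := le_integral_norm_sub_smul_sq_of_integral_inner_eq_zero hL1 hL2 hLX
    ((hindep.comp measurable_id measurable_fst).integral_inner_eq_zero
      (hL1.integrable one_le_two) (hL2.integrable one_le_two) hmean)
    ((hindep.comp measurable_id measurable_snd).integral_inner_eq_zero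
      (hL1.integrable one_le_two) (hLX.integrable one_le_two) hmean) α
  rw [integral_norm_sq_of_forall_hasLaw_gaussianReal hG1,
    integral_norm_sq_of_forall_hasLaw_gaussianReal hG2, Fintype.card_fin,
    Real.coe_toNNReal _ (by positivity), Real.coe_toNNReal _ hP2] at hbound
  have hcross : √(n * P2 * ∫ ω, ‖X ω‖ ^ 2 ∂μ) ≤ n * √(P2 * P) := calc
    _ ≤ √(n * P2 * (n * P)) := by gcongr
    _ = n * √(P2 * P) := by
      rw [show n * P2 * (n * P) = n ^ 2 * (P2 * P) by ring, Real.sqrt_mul (by positivity),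
        Real.sqrt_sq n.cast_nonneg]
  have hα : (1 - α) ^ 2 * (1 / γ) + α ^ 2 * P2 = α * P2 := by
    unfold α
    field_simp
    ring
  linear_combination -(n : ℝ) * hα + 2 * mul_le_mul_of_nonneg_left hcross (sq_nonneg α) + hbound

theorem stmt_8 (n : ℕ) (γ P P2 : ℝ) (hγ : 0 < γ) (hP : 0 ≤ P) (hP2 : 0 ≤ P2)
    {Ω : Type*} [MeasureSpace Ω] (μ : Measure Ω) [IsProbabilityMeasure μ]
    (S1 S2 X : Ω → EuclideanSpace ℝ (Fin n))
    (hmS1 : Measurable S1) (hmS2 : Measurable S2) (hmX : Measurable X)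
    (hS1 : ∀ i, Measure.map (fun ω => S1 ω i) μ = gaussianReal 0 (Real.toNNReal (1 / γ)))
    (hS2 : ∀ i, Measure.map (fun ω => S2 ω i) μ = gaussianReal 0 (Real.toNNReal P2))
    (hindep : IndepFun S1 (fun ω => (S2 ω, X ω)) μ)
    (hXint : Integrable (fun ω => ‖X ω‖ ^ 2) μ)
    (hXpow : ∫ ω, ‖X ω‖ ^ 2 ∂μ ≤ n * P) :
    (n : ℝ) * ((1 / γ) / (1 / γ + P2)) * P2
        - 2 * n * ((1 / γ) / (1 / γ + P2)) ^ 2 * Real.sqrt (P2 * P) ≤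
      ∫ ω, ‖S1 ω - ((1 / γ) / (1 / γ + P2)) • (X ω + S1 ω + S2 ω)‖ ^ 2 ∂μ :=
  stmt_8_general n γ P P2 hγ hP2 μ S1 S2 X hmX hS1 hS2 hindep hXint hXpow
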